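/- Wigner-Eckart theorem for U_h(sl(2)): let T^{(j₁)}={t_{j₁m₁}} be a rank-j₁ tensor operator mapping the irrep W^{(j₂)} into the irrep W^{(j)}. If |φ;m₁m₂⟩ := Σ_{k₁,k₂} α_{k₁,k₂}^{m₁,m₂} t_{j₁k₁}|j₂k₂⟩ satisfies the sl(2)-type relations Z_±|φ;m₁m₂⟩ = √((j₁∓m₁)(j₁±m₁+1))|φ;m₁±1,m₂⟩ + √((j₂∓m₂)(j₂±m₂+1))|φ;m₁,m₂±1⟩, then the matrix elements satisfy Σ_{k₁,k₂} α_{k₁,k₂}^{m₁,m₂} ⟨jm|t_{j₁k₁}|j₂k₂⟩ = C^{j₁,j₂,j}_{m₁,m₂,m} · I(j₁j₂j) for some constant I(j₁j₂j) independent of m₁, m₂, m, where C are the classical sl(2) Clebsch-Gordan coefficients. -/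

import Mathlib

open Finset

/-- Generalized binomial coefficient `C(z,w) = z(z-1)⋯(z-w+1)/w!` for integer `z`,
vanishing for `w < 0`. -/
noncomputable def gchoose (z w : ℤ) : ℝ :=
  if 0 ≤ w then (∏ i ∈ Finset.range w.toNat, ((z : ℝ) - i)) / (w.toNat).factorial else 0

/-- The factor `D_{k₁,k₂}^{m₁,m₂}`.  Throughout, an index `k ∈ {-j,…,j}` is encoded by the
natural number (given here as an integer) `j + k ∈ {0,…,2j}`, and `J = 2j`; thus `μᵢ = jᵢ+mᵢ`
and `aᵢ = jᵢ+kᵢ`. -/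
noncomputable def Dcoef (J₁ J₂ : ℕ) (μ₁ μ₂ a₁ a₂ : ℤ) : ℝ :=
  Real.sqrt
    ((((J₁ : ℤ) - μ₁).toNat.factorial * a₁.toNat.factorial *
        ((J₂ : ℤ) - μ₂).toNat.factorial * a₂.toNat.factorial : ℝ) /
      (μ₁.toNat.factorial * ((J₁ : ℤ) - a₁).toNat.factorial *
        μ₂.toNat.factorial * ((J₂ : ℤ) - a₂).toNat.factorial : ℝ))

/-- The factor `b_{k₁,k₂}^{m₁,m₂} = C(m₁+k₁, k₂-m₂)·C(m₂+k₂, k₁-m₁)` in the encoded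
variables: `m₁+k₁ = μ₁+a₁-J₁`, `k₂-m₂ = a₂-μ₂`, etc. -/
noncomputable def bcoef (J₁ J₂ : ℕ) (μ₁ μ₂ a₁ a₂ : ℤ) : ℝ :=
  gchoose (μ₁ + a₁ - J₁) (a₂ - μ₂) * gchoose (μ₂ + a₂ - J₂) (a₁ - μ₁)

/-- The coefficient `α_{k₁,k₂}^{m₁,m₂}` of `U_h(sl(2))`, in encoded variables (`μᵢ = jᵢ+mᵢ`,
`aᵢ = jᵢ+kᵢ`, `Jᵢ = 2jᵢ`); it vanishes outside the range `mᵢ ≤ kᵢ ≤ jᵢ`, `mᵢ ≥ -jᵢ`. -/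
noncomputable def alphac (h : ℝ) (J₁ J₂ : ℕ) (μ₁ μ₂ a₁ a₂ : ℤ) : ℝ :=
  if 0 ≤ μ₁ ∧ μ₁ ≤ a₁ ∧ a₁ ≤ J₁ ∧ 0 ≤ μ₂ ∧ μ₂ ≤ a₂ ∧ a₂ ≤ J₂ then
    (-1 : ℝ) ^ (a₂ - μ₂).toNat * (h / 2) ^ (a₁ + a₂ - μ₁ - μ₂).toNat *
      Dcoef J₁ J₂ μ₁ μ₂ a₁ a₂ *
      (bcoef J₁ J₂ μ₁ μ₂ a₁ a₂ - bcoef J₁ J₂ μ₁ μ₂ (a₁ - 1) (a₂ - 1))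
  else 0

/-- `ifact z` is `z!` for `z ≥ 0` and `0` for `z < 0`; with Lean's convention `x/0 = 0`,
reciprocals of such factorials vanish exactly when the argument is negative, implementing
the usual convention for Clebsch-Gordan sums. -/
noncomputable def ifact (z : ℤ) : ℝ := if 0 ≤ z then (z.toNat).factorial else 0

/-- The classical `sl(2)` (= `su(2)`) Clebsch-Gordan coefficient
`C^{j₁,j₂,j}_{m₁,m₂,m}`, given by the van der Waerden formula, in the encoded variables
`J = 2j`, `μ = j + m` (so `m = m₁ + m₂` reads `2μ + J₁ + J₂ = 2μ₁ + 2μ₂ + J`). -/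
noncomputable def CG (J₁ J₂ J : ℕ) (μ₁ μ₂ μ : ℤ) : ℝ :=
  if 2 * μ + (J₁ : ℤ) + J₂ = 2 * μ₁ + 2 * μ₂ + J then
    Real.sqrt (((J : ℝ) + 1) * ifact (((J₁ : ℤ) + J₂ - J) / 2) *
        ifact (((J : ℤ) + J₁ - J₂) / 2) * ifact (((J : ℤ) + J₂ - J₁) / 2) /
        ifact (((J₁ : ℤ) + J₂ + J) / 2 + 1)) *
      Real.sqrt (ifact μ₁ * ifact ((J₁ : ℤ) - μ₁) * ifact μ₂ * ifact ((J₂ : ℤ) - μ₂) *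
        ifact μ * ifact ((J : ℤ) - μ)) *
      ∑ k ∈ Finset.range (J₁ + J₂ + 1),
        (-1 : ℝ) ^ k /
          (ifact k * ifact (((J₁ : ℤ) + J₂ - J) / 2 - k) * ifact ((J₁ : ℤ) - μ₁ - k) *
            ifact (μ₂ - k) * ifact (μ₁ - ((J₁ : ℤ) + J₂ - J) / 2 + k) *
            ifact (((J : ℤ) + J₂ - J₁) / 2 - μ₂ + k))
  else 0

/-!
Both the matrix elements `F(m₁, m₂, m) = ⟨jm|φ;m₁m₂⟩` and the Clebsch-Gordan coefficients
solve one linear system: they vanish unless `m = m₁ + m₂` (because `H` is self-adjoint), they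
satisfy the relation that `Z₊|jj⟩ = 0` imposes on the top row `m = j`, and the relation that
`Z₋` imposes between rows `m` and `m - 1`. A solution is determined by its value at the corner
`m₁ = j₁, m = j`: the top-row relation propagates it along `m = j`, the lowering relation then
down to all `m`. The Clebsch-Gordan coefficient at the corner is positive, so with `I` the
ratio of the two corner values, `F - C·I` is a solution vanishing at the corner, hence zero.

On the Clebsch-Gordan side the lowering relation reduces to a three-term recursion of the van
der Waerden sum, proved by telescoping; the top-row relation is the lowering relation at
`m = -j` transported by the reflection `C_{-m₁,-m₂,-m} = (-1)^{j₁+j₂-j} C_{m₁,m₂,m}`.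
-/

lemma ifact_nonneg (z : ℤ) : 0 ≤ ifact z := by
  unfold ifact; split <;> positivity

lemma ifact_of_neg {z : ℤ} (h : z < 0) : ifact z = 0 := by
  simp [ifact, not_le.2 h]

lemma ifact_pos {z : ℤ} (h : 0 ≤ z) : 0 < ifact z := by
  simp only [ifact, if_pos h]; positivity

lemma ifact_eq_mul_ifact_sub_one {z : ℤ} (h : 0 < z) : ifact z = z * ifact (z - 1) := by
  obtain ⟨n, rfl⟩ : ∃ n : ℕ, z = n + 1 := ⟨(z - 1).toNat, by omega⟩
  rw [ifact, ifact, if_pos h.le, if_pos (by omega), add_sub_cancel_right,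
    show ((n : ℤ) + 1).toNat = n + 1 by omega, Int.toNat_natCast, Nat.factorial_succ]
  push_cast; ring

lemma intCast_mul_inv_ifact (n : ℤ) : (n : ℝ) * (ifact n)⁻¹ = (ifact (n - 1))⁻¹ := by
  rcases lt_or_ge 0 n with hn | hn
  · rw [ifact_eq_mul_ifact_sub_one hn, mul_inv, ← mul_assoc,
      mul_inv_cancel₀ (by exact_mod_cast hn.ne'), one_mul]
  · rw [ifact_of_neg (by omega : n - 1 < 0)]
    rcases hn.lt_or_eq with hn | rfl
    · simp [ifact_of_neg hn]
    · simp

noncomputable def vdwWeight (a b c d e f : ℤ) : ℝ :=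
  (ifact a * ifact b * ifact c * ifact d * ifact e * ifact f)⁻¹

lemma vdwWeight_eq_zero {a b c d e f : ℤ}
    (h : a < 0 ∨ b < 0 ∨ c < 0 ∨ d < 0 ∨ e < 0 ∨ f < 0) : vdwWeight a b c d e f = 0 := by
  rcases h with h | h | h | h | h | h <;> simp [vdwWeight, ifact_of_neg h]

lemma vdwWeight_comm (a b c d e f : ℤ) : vdwWeight a b c d e f = vdwWeight b a e f c d := by
  simp only [vdwWeight]; ring

lemma vdwWeight_three_term (a b c d e f : ℤ) :
    ((c + f : ℤ) : ℝ) * vdwWeight a b c d e f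
      = ((e + 1 + b : ℤ) : ℝ) * vdwWeight a b (c - 1) d (e + 1) f
        + ((d + 1 + a : ℤ) : ℝ) * vdwWeight a b c (d + 1) e (f - 1)
        - vdwWeight a (b - 1) (c - 1) d (e + 1) f - vdwWeight (a - 1) b c (d + 1) e (f - 1) := by
  have ha := intCast_mul_inv_ifact a
  have hb := intCast_mul_inv_ifact b
  have hc := intCast_mul_inv_ifact c
  have hd := intCast_mul_inv_ifact (d + 1)
  have he := intCast_mul_inv_ifact (e + 1)
  have hf := intCast_mul_inv_ifact f
  simp only [add_sub_cancel_right] at hd he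
  simp only [vdwWeight, mul_inv]
  push_cast at *
  linear_combination
    (ifact a)⁻¹ * (ifact b)⁻¹ * (ifact d)⁻¹ * (ifact e)⁻¹ * (ifact f)⁻¹ * hc
    + (ifact a)⁻¹ * (ifact b)⁻¹ * (ifact c)⁻¹ * (ifact d)⁻¹ * (ifact e)⁻¹ * hf
    - (ifact a)⁻¹ * (ifact b)⁻¹ * (ifact (c - 1))⁻¹ * (ifact d)⁻¹ * (ifact f)⁻¹ * he
    - (ifact a)⁻¹ * (ifact (c - 1))⁻¹ * (ifact d)⁻¹ * (ifact (e + 1))⁻¹ * (ifact f)⁻¹ * hb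
    - (ifact a)⁻¹ * (ifact b)⁻¹ * (ifact c)⁻¹ * (ifact e)⁻¹ * (ifact (f - 1))⁻¹ * hd
    - (ifact b)⁻¹ * (ifact c)⁻¹ * (ifact (d + 1))⁻¹ * (ifact e)⁻¹ * (ifact (f - 1))⁻¹ * ha

noncomputable def vdwSum (J₁ J₂ : ℕ) (p q μ₁ μ₂ : ℤ) : ℝ :=
  ∑ k ∈ range (J₁ + J₂ + 1), (-1) ^ k *
    vdwWeight k (p - k) (J₁ - μ₁ - k) (μ₂ - k) (μ₁ - p + k) (q - μ₂ + k)

lemma vdwSum_eq_zero {J₁ J₂ : ℕ} {p q μ₁ μ₂ : ℤ}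
    (h : ∀ k : ℤ, 0 ≤ k →
      p - k < 0 ∨ J₁ - μ₁ - k < 0 ∨ μ₂ - k < 0 ∨ μ₁ - p + k < 0 ∨ q - μ₂ + k < 0) :
    vdwSum J₁ J₂ p q μ₁ μ₂ = 0 :=
  sum_eq_zero fun k _ => by
    rw [vdwWeight_eq_zero (Or.inr (h k k.cast_nonneg)), mul_zero]

lemma vdwSum_recursion {J₁ J₂ : ℕ} {p q : ℤ} (μ₁ μ₂ : ℤ) (hpq : p + q = J₂) :
    ((J₁ : ℝ) + J₂ - p - μ₁ - μ₂) * vdwSum J₁ J₂ p q μ₁ μ₂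
      = (μ₁ + 1) * vdwSum J₁ J₂ p q (μ₁ + 1) μ₂ + (μ₂ + 1) * vdwSum J₁ J₂ p q μ₁ (μ₂ + 1) := by
  -- the boundary terms of the three-term identity telescope
  let G : ℕ → ℝ := fun k => (-1) ^ k *
    vdwWeight (k - 1) (p - k) (J₁ - μ₁ - k) (μ₂ + 1 - k) (μ₁ - p + k) (q - μ₂ - 1 + k)
  have hterm : ∀ k : ℕ, ((J₁ : ℝ) + J₂ - p - μ₁ - μ₂) *
      ((-1) ^ k * vdwWeight k (p - k) (J₁ - μ₁ - k) (μ₂ - k) (μ₁ - p + k) (q - μ₂ + k))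
      = (μ₁ + 1) * ((-1) ^ k *
          vdwWeight k (p - k) (J₁ - (μ₁ + 1) - k) (μ₂ - k) (μ₁ + 1 - p + k) (q - μ₂ + k))
        + (μ₂ + 1) * ((-1) ^ k *
          vdwWeight k (p - k) (J₁ - μ₁ - k) (μ₂ + 1 - k) (μ₁ - p + k) (q - (μ₂ + 1) + k))
        + (G (k + 1) - G k) := by
    intro k
    have h := vdwWeight_three_term k (p - k) (J₁ - μ₁ - k) (μ₂ - k) (μ₁ - p + k) (q - μ₂ + k)
    have hJ₂ : (J₂ : ℝ) = p + q := by exact_mod_cast hpq.symm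
    simp only [G, hJ₂]
    push_cast at h ⊢
    linear_combination (norm := ring_nf) (-1 : ℝ) ^ k * h
  have hG₀ : G 0 = 0 := by simp only [G]; rw [vdwWeight_eq_zero (by omega), mul_zero]
  have hG : G (J₁ + J₂ + 1) = 0 := by simp only [G]; rw [vdwWeight_eq_zero (by omega), mul_zero]
  simp only [vdwSum, mul_sum, hterm, sum_add_distrib, sum_range_sub G, hG₀, hG]
  ring

lemma vdwSum_reflect {J₁ J₂ p : ℕ} {q : ℤ} (μ₁ μ₂ : ℤ) (hpq : (p : ℤ) + q = J₂)
    (hp : p ≤ J₁ + J₂) :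
    vdwSum J₁ J₂ p q (J₁ - μ₁) (J₂ - μ₂) = (-1) ^ p * vdwSum J₁ J₂ p q μ₁ μ₂ := by
  have htrunc : ∀ m₁ m₂ : ℤ, vdwSum J₁ J₂ p q m₁ m₂ = ∑ k ∈ range (p + 1),
      (-1) ^ k * vdwWeight k (p - k) (J₁ - m₁ - k) (m₂ - k) (m₁ - p + k) (q - m₂ + k) := by
    refine fun m₁ m₂ => (sum_subset (range_subset_range.2 (by omega)) fun k _ hk => ?_).symm
    rw [vdwWeight_eq_zero (by simp only [mem_range] at hk; omega), mul_zero]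
  rw [htrunc, htrunc, ← sum_range_reflect, mul_sum]
  refine sum_congr rfl fun k hk => ?_
  have hk : k ≤ p := Nat.lt_succ_iff.1 (mem_range.1 hk)
  have hsign : (-1 : ℝ) ^ (p - k) = (-1) ^ p * (-1) ^ k := by
    rw [pow_sub₀ _ (by norm_num) hk, ← inv_pow, inv_neg_one]
  rw [show p + 1 - 1 - k = p - k by omega, Nat.cast_sub hk, hsign, vdwWeight_comm,
    ← hpq]
  ring_nf

lemma sqrt_mul_sqrt_eq_mul_sqrt {a c x y : ℝ} (ha : 0 ≤ a) (hc : 0 ≤ c)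
    (h : a * x = c ^ 2 * y) : √a * √x = c * √y := by
  rw [← Real.sqrt_mul ha, h, Real.sqrt_mul (sq_nonneg c), Real.sqrt_sq hc]

noncomputable def cgRoot (n : ℕ) (m : ℤ) : ℝ := √(ifact m * ifact (n - m))

lemma cgRoot_eq_zero {n : ℕ} {m : ℤ} (h : m < 0 ∨ (n : ℤ) < m) : cgRoot n m = 0 := by
  rcases h with h | h
  · simp [cgRoot, ifact_of_neg h]
  · simp [cgRoot, ifact_of_neg (sub_neg.2 h)]

lemma cgRoot_pos {n : ℕ} {m : ℤ} (h₀ : 0 ≤ m) (h₁ : m ≤ n) : 0 < cgRoot n m :=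
  Real.sqrt_pos.2 (mul_pos (ifact_pos h₀) (ifact_pos (by omega)))

lemma cgRoot_reflect (n : ℕ) (m : ℤ) : cgRoot n (n - m) = cgRoot n m := by
  rw [cgRoot, cgRoot, sub_sub_cancel, mul_comm]

lemma sqrt_mul_cgRoot_add_one {n : ℕ} {m : ℤ} (h₀ : 0 ≤ m) (h₁ : m < n) :
    √(((n : ℝ) - m) * (m + 1)) * cgRoot n (m + 1) = (m + 1) * cgRoot n m := by
  have hm : (0 : ℝ) ≤ m := by exact_mod_cast h₀
  have hmn : (m : ℝ) < n := by exact_mod_cast h₁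
  refine sqrt_mul_sqrt_eq_mul_sqrt (by nlinarith) (by linarith) ?_
  rw [ifact_eq_mul_ifact_sub_one (by omega : 0 < m + 1),
    ifact_eq_mul_ifact_sub_one (by omega : 0 < (n : ℤ) - m), add_sub_cancel_right,
    show (n : ℤ) - m - 1 = n - (m + 1) by ring]
  push_cast; ring

lemma sqrt_mul_cgRoot_sub_one {n : ℕ} {m : ℤ} (h₀ : 1 ≤ m) (h₁ : m ≤ n) :
    √((m : ℝ) * (n - m + 1)) * cgRoot n (m - 1) = (n - m + 1) * cgRoot n m := by
  have hm : (1 : ℝ) ≤ m := by exact_mod_cast h₀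
  have hmn : (m : ℝ) ≤ n := by exact_mod_cast h₁
  refine sqrt_mul_sqrt_eq_mul_sqrt (by nlinarith) (by linarith) ?_
  rw [ifact_eq_mul_ifact_sub_one (by omega : 0 < m),
    ifact_eq_mul_ifact_sub_one (by omega : 0 < (n : ℤ) - (m - 1)),
    show (n : ℤ) - (m - 1) - 1 = n - m by ring]
  push_cast; ring

noncomputable def cgNorm (J₁ J₂ J : ℕ) : ℝ :=
  √(((J : ℝ) + 1) * ifact (((J₁ : ℤ) + J₂ - J) / 2) *
    ifact (((J : ℤ) + J₁ - J₂) / 2) * ifact (((J : ℤ) + J₂ - J₁) / 2) /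
    ifact (((J₁ : ℤ) + J₂ + J) / 2 + 1))

lemma CG_eq_ite (J₁ J₂ J : ℕ) (μ₁ μ₂ μ : ℤ) :
    CG J₁ J₂ J μ₁ μ₂ μ = if 2 * μ + (J₁ : ℤ) + J₂ = 2 * μ₁ + 2 * μ₂ + J then
      cgNorm J₁ J₂ J * (cgRoot J₁ μ₁ * cgRoot J₂ μ₂ * cgRoot J μ) *
        vdwSum J₁ J₂ (((J₁ : ℤ) + J₂ - J) / 2) (((J : ℤ) + J₂ - J₁) / 2) μ₁ μ₂
    else 0 := by
  unfold CG
  split_ifs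
  · congr 2
    have hf := ifact_nonneg
    rw [cgRoot, cgRoot, cgRoot, ← Real.sqrt_mul (mul_nonneg (hf _) (hf _)),
      ← Real.sqrt_mul (mul_nonneg (mul_nonneg (hf _) (hf _)) (mul_nonneg (hf _) (hf _)))]
    ring_nf
  · rfl

lemma CG_eq_zero_of_not_shell {J₁ J₂ J : ℕ} {μ₁ μ₂ μ : ℤ}
    (h : 2 * μ + (J₁ : ℤ) + J₂ ≠ 2 * μ₁ + 2 * μ₂ + J) : CG J₁ J₂ J μ₁ μ₂ μ = 0 := by
  rw [CG_eq_ite, if_neg h]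

lemma CG_support {J₁ J₂ J : ℕ} {μ₁ μ₂ μ : ℤ} (h : CG J₁ J₂ J μ₁ μ₂ μ ≠ 0) :
    0 ≤ μ₁ ∧ μ₁ ≤ J₁ ∧ 0 ≤ μ₂ ∧ μ₂ ≤ J₂ ∧ 2 * μ + (J₁ : ℤ) + J₂ = 2 * μ₁ + 2 * μ₂ + J := by
  rw [CG_eq_ite] at h
  split_ifs at h with hsh
  · by_contra hout
    rcases (by omega : (μ₁ < 0 ∨ (J₁ : ℤ) < μ₁) ∨ (μ₂ < 0 ∨ (J₂ : ℤ) < μ₂)) with h₁ | h₂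
    · simp [cgRoot_eq_zero h₁] at h
    · simp [cgRoot_eq_zero h₂] at h
  · exact absurd rfl h

lemma CG_reflect {J₁ J₂ J : ℕ} (htri : (J : ℤ) ≤ J₁ + J₂) (hpar : (J₁ + J₂ + J) % 2 = 0)
    (μ₁ μ₂ μ : ℤ) :
    CG J₁ J₂ J (J₁ - μ₁) (J₂ - μ₂) (J - μ)
      = (-1) ^ (((J₁ : ℤ) + J₂ - J) / 2).toNat * CG J₁ J₂ J μ₁ μ₂ μ := by
  obtain ⟨p, hp⟩ : ∃ p : ℕ, ((J₁ : ℤ) + J₂ - J) / 2 = p :=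
    ⟨_, (Int.toNat_of_nonneg (by omega)).symm⟩
  rw [CG_eq_ite, CG_eq_ite, hp, Int.toNat_natCast]
  by_cases hsh : 2 * μ + (J₁ : ℤ) + J₂ = 2 * μ₁ + 2 * μ₂ + J
  · rw [if_pos (by omega), if_pos hsh, cgRoot_reflect, cgRoot_reflect, cgRoot_reflect,
      vdwSum_reflect μ₁ μ₂ (by omega) (by omega)]
    ring
  · rw [if_neg (by omega), if_neg hsh, mul_zero]

lemma CG_lowering {J₁ J₂ J : ℕ} (hpar : (J₁ + J₂ + J) % 2 = 0) {μ₁ μ₂ μ : ℤ}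
    (h₁ : 0 ≤ μ₁) (h₁' : μ₁ ≤ J₁) (h₂ : 0 ≤ μ₂) (h₂' : μ₂ ≤ J₂) (h : 0 ≤ μ) (h' : μ ≤ J) :
    √((μ : ℝ) * ((J : ℝ) - μ + 1)) * CG J₁ J₂ J μ₁ μ₂ (μ - 1)
      = √(((J₁ : ℝ) - μ₁) * ((μ₁ : ℝ) + 1)) * CG J₁ J₂ J (μ₁ + 1) μ₂ μ
        + √(((J₂ : ℝ) - μ₂) * ((μ₂ : ℝ) + 1)) * CG J₁ J₂ J μ₁ (μ₂ + 1) μ := by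
  by_cases hsh : 2 * (μ - 1) + (J₁ : ℤ) + J₂ = 2 * μ₁ + 2 * μ₂ + J
  swap
  · rw [CG_eq_zero_of_not_shell hsh, CG_eq_zero_of_not_shell (by omega),
      CG_eq_zero_of_not_shell (by omega)]
    ring
  set p := ((J₁ : ℤ) + J₂ - J) / 2
  set q := ((J : ℤ) + J₂ - J₁) / 2
  have hpq : p + q = J₂ := by omega
  rw [CG_eq_ite, CG_eq_ite, CG_eq_ite, if_pos hsh, if_pos (by omega), if_pos (by omega)]
  -- at the boundary of each range the square root vanishes, and so does the sum it multiplies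
  have e : √((μ : ℝ) * ((J : ℝ) - μ + 1)) * cgRoot J (μ - 1) * vdwSum J₁ J₂ p q μ₁ μ₂
      = ((J : ℝ) - μ + 1) * cgRoot J μ * vdwSum J₁ J₂ p q μ₁ μ₂ := by
    rcases h.eq_or_lt with rfl | hμ
    · rw [vdwSum_eq_zero fun k _ => by omega]; ring
    · rw [sqrt_mul_cgRoot_sub_one hμ h']
  have e₁ : √(((J₁ : ℝ) - μ₁) * ((μ₁ : ℝ) + 1)) * cgRoot J₁ (μ₁ + 1) *
        vdwSum J₁ J₂ p q (μ₁ + 1) μ₂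
      = ((μ₁ : ℝ) + 1) * cgRoot J₁ μ₁ * vdwSum J₁ J₂ p q (μ₁ + 1) μ₂ := by
    rcases h₁'.eq_or_lt with rfl | hμ₁
    · rw [vdwSum_eq_zero fun k _ => by omega]; ring
    · rw [sqrt_mul_cgRoot_add_one h₁ hμ₁]
  have e₂ : √(((J₂ : ℝ) - μ₂) * ((μ₂ : ℝ) + 1)) * cgRoot J₂ (μ₂ + 1) *
        vdwSum J₁ J₂ p q μ₁ (μ₂ + 1)
      = ((μ₂ : ℝ) + 1) * cgRoot J₂ μ₂ * vdwSum J₁ J₂ p q μ₁ (μ₂ + 1) := by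
    rcases h₂'.eq_or_lt with rfl | hμ₂
    · rw [vdwSum_eq_zero fun k _ => by omega]; ring
    · rw [sqrt_mul_cgRoot_add_one h₂ hμ₂]
  have hrec := vdwSum_recursion (J₁ := J₁) μ₁ μ₂ hpq
  have hcoef : (J : ℝ) - μ + 1 = (J₁ : ℝ) + J₂ - p - μ₁ - μ₂ := by
    have : (J : ℤ) - μ + 1 = J₁ + J₂ - p - μ₁ - μ₂ := by omega
    exact_mod_cast this
  linear_combination cgNorm J₁ J₂ J * (cgRoot J₁ μ₁ * cgRoot J₂ μ₂ *
      (e + cgRoot J μ * vdwSum J₁ J₂ p q μ₁ μ₂ * hcoef + cgRoot J μ * hrec)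
    - cgRoot J₂ μ₂ * cgRoot J μ * e₁ - cgRoot J₁ μ₁ * cgRoot J μ * e₂)

lemma CG_top_row {J₁ J₂ J : ℕ} (htri : (J : ℤ) ≤ J₁ + J₂) (hpar : (J₁ + J₂ + J) % 2 = 0)
    {μ₁ μ₂ : ℤ} (h₁ : 0 ≤ μ₁) (h₁' : μ₁ ≤ J₁) (h₂ : 0 ≤ μ₂) (h₂' : μ₂ ≤ J₂) :
    √((μ₁ : ℝ) * ((J₁ : ℝ) - μ₁ + 1)) * CG J₁ J₂ J (μ₁ - 1) μ₂ J
      + √((μ₂ : ℝ) * ((J₂ : ℝ) - μ₂ + 1)) * CG J₁ J₂ J μ₁ (μ₂ - 1) J = 0 := by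
  -- the lowering relation out of the bottom row `μ = 0`, reflected
  have h := CG_lowering hpar (μ₁ := J₁ - μ₁) (μ₂ := J₂ - μ₂) (μ := J - J)
    (by omega) (by omega) (by omega) (by omega) (by omega) (by omega)
  rw [show (J₁ : ℤ) - μ₁ + 1 = J₁ - (μ₁ - 1) by ring,
    show (J₂ : ℤ) - μ₂ + 1 = J₂ - (μ₂ - 1) by ring,
    CG_reflect htri hpar, CG_reflect htri hpar, sub_self] at h
  simp only [Int.cast_zero, zero_mul, Real.sqrt_zero] at h
  refine (mul_eq_zero.1 ?_).resolve_left (pow_ne_zero (((J₁ : ℤ) + J₂ - J) / 2).toNat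
    (by norm_num : (-1 : ℝ) ≠ 0))
  push_cast at h
  linear_combination (norm := ring_nf) -h

lemma CG_corner_pos {J₁ J₂ J : ℕ} (htri₁ : (J : ℤ) ≤ J₁ + J₂) (htri₂ : (J₁ : ℤ) ≤ J + J₂)
    (htri₃ : (J₂ : ℤ) ≤ J + J₁) {q : ℤ} (hq : 2 * q = J + J₂ - J₁) :
    0 < CG J₁ J₂ J J₁ q J := by
  rw [CG_eq_ite, if_pos (by omega)]
  have hnorm : 0 < cgNorm J₁ J₂ J :=
    Real.sqrt_pos.2 (div_pos (mul_pos (mul_pos (mul_pos (by positivity)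
      (ifact_pos (by omega))) (ifact_pos (by omega))) (ifact_pos (by omega)))
      (ifact_pos (by omega)))
  have hroots := mul_pos (mul_pos (cgRoot_pos (n := J₁) (by omega) le_rfl)
    (cgRoot_pos (n := J₂) (m := q) (by omega) (by omega))) (cgRoot_pos (n := J) (by omega) le_rfl)
  -- only `k = 0` contributes to the sum
  have hsum : 0 < vdwSum J₁ J₂ (((J₁ : ℤ) + J₂ - J) / 2) (((J : ℤ) + J₂ - J₁) / 2) J₁ q := by
    rw [vdwSum, sum_eq_single_of_mem 0 (by simp) fun k _ hk =>
      by rw [vdwWeight_eq_zero (by omega), mul_zero]]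
    simp only [vdwWeight, pow_zero, one_mul]
    exact inv_pos.2 (by repeat' apply mul_pos <;> try apply ifact_pos <;> omega)
  positivity

lemma sqrt_mul_sub_add_one_pos {n : ℕ} {m : ℤ} (h : 1 ≤ m) (h' : m ≤ n) :
    0 < √((m : ℝ) * ((n : ℝ) - m + 1)) := by
  have h₁ : (1 : ℝ) ≤ m := by exact_mod_cast h
  have h₂ : (m : ℝ) ≤ n := by exact_mod_cast h'
  exact Real.sqrt_pos.2 (by nlinarith)

structure IsLadderSolution (J₁ J₂ J : ℕ) (F : ℤ → ℤ → ℤ → ℝ) : Prop where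
  support : ∀ {μ₁ μ₂ μ : ℤ}, 0 ≤ μ → μ ≤ J → F μ₁ μ₂ μ ≠ 0 →
    0 ≤ μ₁ ∧ μ₁ ≤ J₁ ∧ 0 ≤ μ₂ ∧ μ₂ ≤ J₂ ∧ 2 * μ + (J₁ : ℤ) + J₂ = 2 * μ₁ + 2 * μ₂ + J
  top : ∀ {μ₁ μ₂ : ℤ}, 0 ≤ μ₁ → μ₁ ≤ J₁ → 0 ≤ μ₂ → μ₂ ≤ J₂ →
    √((μ₁ : ℝ) * ((J₁ : ℝ) - μ₁ + 1)) * F (μ₁ - 1) μ₂ J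
      + √((μ₂ : ℝ) * ((J₂ : ℝ) - μ₂ + 1)) * F μ₁ (μ₂ - 1) J = 0
  lowering : ∀ {μ₁ μ₂ μ : ℤ}, 0 ≤ μ₁ → μ₁ ≤ J₁ → 0 ≤ μ₂ → μ₂ ≤ J₂ → 1 ≤ μ → μ ≤ J →
    √((μ : ℝ) * ((J : ℝ) - μ + 1)) * F μ₁ μ₂ (μ - 1)
      = √(((J₁ : ℝ) - μ₁) * ((μ₁ : ℝ) + 1)) * F (μ₁ + 1) μ₂ μ
        + √(((J₂ : ℝ) - μ₂) * ((μ₂ : ℝ) + 1)) * F μ₁ (μ₂ + 1) μ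

namespace IsLadderSolution

variable {J₁ J₂ J : ℕ} {F G : ℤ → ℤ → ℤ → ℝ}

lemma sub_mul (hF : IsLadderSolution J₁ J₂ J F) (hG : IsLadderSolution J₁ J₂ J G) (c : ℝ) :
    IsLadderSolution J₁ J₂ J fun μ₁ μ₂ μ => F μ₁ μ₂ μ - G μ₁ μ₂ μ * c where
  support {μ₁ μ₂ μ} h h' hne := by
    by_cases hF0 : F μ₁ μ₂ μ = 0
    · exact hG.support h h' fun hG0 => hne (by rw [hF0, hG0]; ring)
    · exact hF.support h h' hF0
  top h₁ h₁' h₂ h₂' := by linear_combination hF.top h₁ h₁' h₂ h₂' - c * hG.top h₁ h₁' h₂ h₂'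
  lowering h₁ h₁' h₂ h₂' h h' := by
    linear_combination hF.lowering h₁ h₁' h₂ h₂' h h' - c * hG.lowering h₁ h₁' h₂ h₂' h h'

lemma top_row_eq_zero (hF : IsLadderSolution J₁ J₂ J F) {q : ℤ} (hq : 2 * q = J + J₂ - J₁)
    (hcorner : F J₁ q J = 0) (μ₁ μ₂ : ℤ) : F μ₁ μ₂ J = 0 := by
  rcases lt_or_ge (J₁ : ℤ) μ₁ with hlt | hle
  · by_contra hne
    have := hF.support (Nat.cast_nonneg J) le_rfl hne
    omega
  induction μ₁, hle using Int.leInductionDown generalizing μ₂ with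
  | base =>
    by_contra hne
    obtain rfl : μ₂ = q := by have := hF.support (Nat.cast_nonneg J) le_rfl hne; omega
    exact hne hcorner
  | pred n hn ih =>
    by_contra hne
    obtain ⟨h₁, -, h₂, h₂', -⟩ := hF.support (Nat.cast_nonneg J) le_rfl hne
    have htop := hF.top (by omega) hn h₂ h₂'
    rw [ih, mul_zero, add_zero] at htop
    exact hne ((mul_eq_zero.1 htop).resolve_left (sqrt_mul_sub_add_one_pos (by omega) hn).ne')

lemma eq_zero (hF : IsLadderSolution J₁ J₂ J F) {q : ℤ} (hq : 2 * q = J + J₂ - J₁)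
    (hcorner : F J₁ q J = 0) (μ₁ μ₂ : ℤ) {μ : ℤ} (h : 0 ≤ μ) (h' : μ ≤ J) : F μ₁ μ₂ μ = 0 := by
  induction μ, h' using Int.leInductionDown generalizing μ₁ μ₂ with
  | base => exact hF.top_row_eq_zero hq hcorner μ₁ μ₂
  | pred n hn ih =>
    by_contra hne
    obtain ⟨h₁, h₁', h₂, h₂', -⟩ := hF.support h (by omega) hne
    have hlow := hF.lowering h₁ h₁' h₂ h₂' (by omega) hn
    rw [ih (μ₁ + 1) μ₂ (by omega), ih μ₁ (μ₂ + 1) (by omega), mul_zero, mul_zero,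
      add_zero] at hlow
    exact hne ((mul_eq_zero.1 hlow).resolve_left (sqrt_mul_sub_add_one_pos (by omega) hn).ne')

end IsLadderSolution

lemma isLadderSolution_CG {J₁ J₂ J : ℕ} (htri : (J : ℤ) ≤ J₁ + J₂)
    (hpar : (J₁ + J₂ + J) % 2 = 0) : IsLadderSolution J₁ J₂ J (CG J₁ J₂ J) where
  support _ _ hne := CG_support hne
  top h₁ h₁' h₂ h₂' := CG_top_row htri hpar h₁ h₁' h₂ h₂'
  lowering h₁ h₁' h₂ h₂' h h' := CG_lowering hpar h₁ h₁' h₂ h₂' (by omega) h'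

lemma isLadderSolution_inner {V : Type*} [NormedAddCommGroup V] [InnerProductSpace ℝ V]
    {J₁ J₂ J : ℕ} (ket : ℤ → V) (Zp Zm Hop : V →ₗ[ℝ] V) (φ : ℤ → ℤ → V)
    (hφ : ∀ μ₁ μ₂ : ℤ, ¬(0 ≤ μ₁ ∧ μ₁ ≤ J₁ ∧ 0 ≤ μ₂ ∧ μ₂ ≤ J₂) → φ μ₁ μ₂ = 0)
    (hZp : Zp (ket J) = 0)
    (hZm : ∀ μ : ℤ, 0 ≤ μ → μ ≤ J →
      Zm (ket μ) = √((μ : ℝ) * ((J : ℝ) - μ + 1)) • ket (μ - 1))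
    (hH : ∀ μ : ℤ, 0 ≤ μ → μ ≤ J → Hop (ket μ) = ((2 * μ - J : ℤ) : ℝ) • ket μ)
    (hadj : ∀ v w : V, (inner ℝ (Zp v) w : ℝ) = inner ℝ v (Zm w))
    (hadjH : ∀ v w : V, (inner ℝ (Hop v) w : ℝ) = inner ℝ v (Hop w))
    (hladP : ∀ μ₁ μ₂ : ℤ, Zp (φ μ₁ μ₂)
      = √(((J₁ : ℝ) - μ₁) * (μ₁ + 1)) • φ (μ₁ + 1) μ₂
        + √(((J₂ : ℝ) - μ₂) * (μ₂ + 1)) • φ μ₁ (μ₂ + 1))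
    (hladM : ∀ μ₁ μ₂ : ℤ, Zm (φ μ₁ μ₂)
      = √((μ₁ : ℝ) * ((J₁ : ℝ) - μ₁ + 1)) • φ (μ₁ - 1) μ₂
        + √((μ₂ : ℝ) * ((J₂ : ℝ) - μ₂ + 1)) • φ μ₁ (μ₂ - 1))
    (hladH : ∀ μ₁ μ₂ : ℤ, Hop (φ μ₁ μ₂)
      = ((2 * (μ₁ + μ₂) - J₁ - J₂ : ℤ) : ℝ) • φ μ₁ μ₂) :
    IsLadderSolution J₁ J₂ J fun μ₁ μ₂ μ => inner ℝ (ket μ) (φ μ₁ μ₂) where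
  support {μ₁ μ₂ μ} h h' hne := by
    have hrange : 0 ≤ μ₁ ∧ μ₁ ≤ J₁ ∧ 0 ≤ μ₂ ∧ μ₂ ≤ J₂ := by
      by_contra hout
      exact hne (by rw [hφ μ₁ μ₂ hout, inner_zero_right])
    have hweight := hadjH (ket μ) (φ μ₁ μ₂)
    rw [hH μ h h', hladH, real_inner_smul_left, real_inner_smul_right] at hweight
    have : 2 * μ - J = 2 * (μ₁ + μ₂) - J₁ - J₂ := by
      exact_mod_cast mul_right_cancel₀ hne hweight
    exact ⟨hrange.1, hrange.2.1, hrange.2.2.1, hrange.2.2.2, by omega⟩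
  top {μ₁ μ₂} _ _ _ _ := by
    have h := hadj (ket J) (φ μ₁ μ₂)
    rw [hZp, inner_zero_left, hladM, inner_add_right, real_inner_smul_right,
      real_inner_smul_right] at h
    exact h.symm
  lowering {μ₁ μ₂ μ} _ _ _ _ h h' := by
    have h := hadj (φ μ₁ μ₂) (ket μ)
    rw [hZm μ (by omega) h', hladP, inner_add_left, real_inner_smul_left,
      real_inner_smul_left, real_inner_smul_right, real_inner_comm (ket μ),
      real_inner_comm (ket μ), real_inner_comm (ket (μ - 1))] at h
    exact h.symm

lemma alphac_eq_zero {h : ℝ} {J₁ J₂ : ℕ} {μ₁ μ₂ : ℤ}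
    (hμ : ¬(0 ≤ μ₁ ∧ μ₁ ≤ J₁ ∧ 0 ≤ μ₂ ∧ μ₂ ≤ J₂)) (a₁ a₂ : ℤ) :
    alphac h J₁ J₂ μ₁ μ₂ a₁ a₂ = 0 := by
  rw [alphac, if_neg (by omega)]

theorem wigner_eckart_jordanian_general (h : ℝ) (J₁ J₂ J : ℕ)
    (htri₁ : (J : ℤ) ≤ J₁ + J₂) (htri₂ : (J₁ : ℤ) ≤ J + J₂) (htri₃ : (J₂ : ℤ) ≤ J + J₁)
    (hpar : (J₁ + J₂ + J) % 2 = 0)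
    {V₂ : Type*} [AddCommGroup V₂] [Module ℝ V₂]
    {V : Type*} [NormedAddCommGroup V] [InnerProductSpace ℝ V]
    (ket : ℤ → V) (ket2 : ℤ → V₂) (Zp Zm Hop : V →ₗ[ℝ] V) (t : ℤ → (V₂ →ₗ[ℝ] V))
    (hZp : ∀ μ : ℤ, 0 ≤ μ → μ ≤ J →
      Zp (ket μ) = Real.sqrt (((J : ℝ) - μ) * (μ + 1)) • ket (μ + 1))
    (hZm : ∀ μ : ℤ, 0 ≤ μ → μ ≤ J →
      Zm (ket μ) = Real.sqrt ((μ : ℝ) * ((J : ℝ) - μ + 1)) • ket (μ - 1))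
    (hH : ∀ μ : ℤ, 0 ≤ μ → μ ≤ J → Hop (ket μ) = ((2 * μ - J : ℤ) : ℝ) • ket μ)
    (hadj : ∀ v w : V, (inner ℝ (Zp v) w : ℝ) = inner ℝ v (Zm w))
    (hadjH : ∀ v w : V, (inner ℝ (Hop v) w : ℝ) = inner ℝ v (Hop w))
    (φ : ℤ → ℤ → V)
    (hφ : ∀ μ₁ μ₂ : ℤ, φ μ₁ μ₂ =
      ∑ a₁ ∈ Finset.Icc (0 : ℤ) J₁, ∑ a₂ ∈ Finset.Icc (0 : ℤ) J₂,
        alphac h J₁ J₂ μ₁ μ₂ a₁ a₂ • (t a₁) (ket2 a₂))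
    (hladP : ∀ μ₁ μ₂ : ℤ, Zp (φ μ₁ μ₂)
      = Real.sqrt (((J₁ : ℝ) - μ₁) * (μ₁ + 1)) • φ (μ₁ + 1) μ₂
        + Real.sqrt (((J₂ : ℝ) - μ₂) * (μ₂ + 1)) • φ μ₁ (μ₂ + 1))
    (hladM : ∀ μ₁ μ₂ : ℤ, Zm (φ μ₁ μ₂)
      = Real.sqrt ((μ₁ : ℝ) * ((J₁ : ℝ) - μ₁ + 1)) • φ (μ₁ - 1) μ₂
        + Real.sqrt ((μ₂ : ℝ) * ((J₂ : ℝ) - μ₂ + 1)) • φ μ₁ (μ₂ - 1))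
    (hladH : ∀ μ₁ μ₂ : ℤ, Hop (φ μ₁ μ₂)
      = ((2 * (μ₁ + μ₂) - J₁ - J₂ : ℤ) : ℝ) • φ μ₁ μ₂) :
    ∃ I : ℝ, ∀ μ₁ μ₂ μ : ℤ,
      0 ≤ μ₁ → μ₁ ≤ J₁ → 0 ≤ μ₂ → μ₂ ≤ J₂ → 0 ≤ μ → μ ≤ J →
        (inner ℝ (ket μ) (φ μ₁ μ₂) : ℝ) = CG J₁ J₂ J μ₁ μ₂ μ * I := by
  have hF : IsLadderSolution J₁ J₂ J fun μ₁ μ₂ μ => inner ℝ (ket μ) (φ μ₁ μ₂) :=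
    isLadderSolution_inner ket Zp Zm Hop φ
      (fun μ₁ μ₂ hμ => by simp only [hφ, alphac_eq_zero hμ, zero_smul, sum_const_zero])
      (by simpa using hZp J (Nat.cast_nonneg J) le_rfl) hZm hH hadj hadjH hladP hladM hladH
  obtain ⟨q, hq⟩ : ∃ q : ℤ, 2 * q = J + J₂ - J₁ := ⟨((J : ℤ) + J₂ - J₁) / 2, by omega⟩
  have hcorner := CG_corner_pos htri₁ htri₂ htri₃ hq
  set I := inner ℝ (ket J) (φ J₁ q) / CG J₁ J₂ J J₁ q J
  refine ⟨I, fun μ₁ μ₂ μ _ _ _ _ hμ hμ' => sub_eq_zero.1 ?_⟩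
  refine (hF.sub_mul (isLadderSolution_CG htri₁ hpar) I).eq_zero hq ?_ μ₁ μ₂ hμ hμ'
  exact sub_eq_zero.2 (mul_div_cancel₀ _ hcorner.ne').symm

/-- **Wigner-Eckart theorem for `U_h(sl(2))`.**  Let `t a₁` (for `a₁ = j₁ + k₁`) be the
components of a rank-`j₁` tensor operator mapping the irrep `W^{(j₂)}` (with basis
`ket2 a₂`, `a₂ = j₂ + k₂`) into the irrep `W^{(j)}` (with orthonormal basis `ket μ`,
`μ = j + m`, on which `Z₊, Z₋, H` act by the standard unitary `sl(2)` formulas).  If the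
contracted intermediate vectors `φ m₁ m₂ = Σ_k α_{k₁,k₂}^{m₁,m₂} t_{j₁k₁}|j₂k₂⟩` satisfy
the `sl(2)`-type ladder relations, then the matrix elements
`Σ_k α_{k₁,k₂}^{m₁,m₂} ⟨jm|t_{j₁k₁}|j₂k₂⟩ = ⟨jm|φ;m₁m₂⟩` are proportional to the
classical Clebsch-Gordan coefficients, with a proportionality constant `I(j₁j₂j)`
independent of `m₁, m₂, m`. -/
theorem wigner_eckart_jordanian (h : ℝ) (J₁ J₂ J : ℕ)
    (htri₁ : (J : ℤ) ≤ J₁ + J₂) (htri₂ : (J₁ : ℤ) ≤ J + J₂) (htri₃ : (J₂ : ℤ) ≤ J + J₁)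
    (hpar : (J₁ + J₂ + J) % 2 = 0)
    {V₂ : Type*} [AddCommGroup V₂] [Module ℝ V₂]
    {V : Type*} [NormedAddCommGroup V] [InnerProductSpace ℝ V]
    (ket : ℤ → V) (ket2 : ℤ → V₂) (Zp Zm Hop : V →ₗ[ℝ] V) (t : ℤ → (V₂ →ₗ[ℝ] V))
    (horth : ∀ μ ν : ℤ, 0 ≤ μ → μ ≤ J → 0 ≤ ν → ν ≤ J →
      (inner ℝ (ket μ) (ket ν) : ℝ) = if μ = ν then 1 else 0)
    (hZp : ∀ μ : ℤ, 0 ≤ μ → μ ≤ J →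
      Zp (ket μ) = Real.sqrt (((J : ℝ) - μ) * (μ + 1)) • ket (μ + 1))
    (hZm : ∀ μ : ℤ, 0 ≤ μ → μ ≤ J →
      Zm (ket μ) = Real.sqrt ((μ : ℝ) * ((J : ℝ) - μ + 1)) • ket (μ - 1))
    (hH : ∀ μ : ℤ, 0 ≤ μ → μ ≤ J → Hop (ket μ) = ((2 * μ - J : ℤ) : ℝ) • ket μ)
    (hadj : ∀ v w : V, (inner ℝ (Zp v) w : ℝ) = inner ℝ v (Zm w))
    (hadjH : ∀ v w : V, (inner ℝ (Hop v) w : ℝ) = inner ℝ v (Hop w))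
    (φ : ℤ → ℤ → V)
    (hφ : ∀ μ₁ μ₂ : ℤ, φ μ₁ μ₂ =
      ∑ a₁ ∈ Finset.Icc (0 : ℤ) J₁, ∑ a₂ ∈ Finset.Icc (0 : ℤ) J₂,
        alphac h J₁ J₂ μ₁ μ₂ a₁ a₂ • (t a₁) (ket2 a₂))
    (hladP : ∀ μ₁ μ₂ : ℤ, Zp (φ μ₁ μ₂)
      = Real.sqrt (((J₁ : ℝ) - μ₁) * (μ₁ + 1)) • φ (μ₁ + 1) μ₂
        + Real.sqrt (((J₂ : ℝ) - μ₂) * (μ₂ + 1)) • φ μ₁ (μ₂ + 1))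
    (hladM : ∀ μ₁ μ₂ : ℤ, Zm (φ μ₁ μ₂)
      = Real.sqrt ((μ₁ : ℝ) * ((J₁ : ℝ) - μ₁ + 1)) • φ (μ₁ - 1) μ₂
        + Real.sqrt ((μ₂ : ℝ) * ((J₂ : ℝ) - μ₂ + 1)) • φ μ₁ (μ₂ - 1))
    (hladH : ∀ μ₁ μ₂ : ℤ, Hop (φ μ₁ μ₂)
      = ((2 * (μ₁ + μ₂) - J₁ - J₂ : ℤ) : ℝ) • φ μ₁ μ₂) :
    ∃ I : ℝ, ∀ μ₁ μ₂ μ : ℤ,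
      0 ≤ μ₁ → μ₁ ≤ J₁ → 0 ≤ μ₂ → μ₂ ≤ J₂ → 0 ≤ μ → μ ≤ J →
        (inner ℝ (ket μ) (φ μ₁ μ₂) : ℝ) = CG J₁ J₂ J μ₁ μ₂ μ * I :=
  wigner_eckart_jordanian_general h J₁ J₂ J htri₁ htri₂ htri₃ hpar ket ket2 Zp Zm Hop t hZp hZm hH
    hadj hadjH φ hφ hladP hladM hladH
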